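/- arXiv:1508.06851 — 4 statements merged into one kernel-verified Lean document; each statement's English description precedes it below -/
import Mathlib

section
/- Let k₁ > 0 and k₂ > 0. For λ > 0 define ω(λ) = sqrt((k₂²λ² + sqrt(k₂⁴λ⁴ + 4k₁²λ²))/2) and τ(λ) = (1/ω(λ))·arctan(k₂·ω(λ)/k₁). Then τ is strictly decreasing on (0,∞); in particular, for any 0 < λ₁ < λ₂ one has τ(λ₂) < τ(λ₁), so among any finite set of positive Laplacian eigenvalues the largest one yields the smallest crossing delay. -/
open Real Set

lemma aux_arctan_gt {t : ℝ} (ht : 0 < t) : t / (1 + t ^ 2) < Real.arctan t := by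
  have h : StrictMonoOn (fun s : ℝ => Real.arctan s - s / (1 + s ^ 2)) (Ici 0) := by
    apply strictMonoOn_of_deriv_pos (convex_Ici 0)
    · apply Continuous.continuousOn
      exact Real.continuous_arctan.sub
        (continuous_id.div (by continuity) (fun x => by positivity))
    · intro x hx
      rw [interior_Ici] at hx
      have hx0 : (0:ℝ) < x := hx
      have hden : (1 + x ^ 2) ≠ 0 := by positivity
      have h1 : HasDerivAt (fun s : ℝ => Real.arctan s - s / (1 + s ^ 2))
          (1 / (1 + x ^ 2) - (1 * (1 + x ^ 2) - x * (2 * x)) / (1 + x ^ 2) ^ 2) x := by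
        apply (Real.hasDerivAt_arctan x).sub
        exact (hasDerivAt_id x).div (((hasDerivAt_pow 2 x).const_add 1).congr_deriv
          (by ring)) hden
      rw [h1.deriv]
      rw [div_sub_div _ _ hden (by positivity)]
      apply div_pos
      · nlinarith [sq_nonneg x]
      · positivity
  have h0 : (fun s : ℝ => Real.arctan s - s / (1 + s ^ 2)) 0 <
      (fun s : ℝ => Real.arctan s - s / (1 + s ^ 2)) t :=
    h (self_mem_Ici) (le_of_lt ht) ht
  simp [Real.arctan_zero] at h0
  linarith

lemma aux_arctan_div_strictAnti :
    StrictAntiOn (fun t : ℝ => Real.arctan t / t) (Ioi 0) := by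
  apply strictAntiOn_of_deriv_neg (convex_Ioi 0)
  · apply ContinuousOn.div Real.continuous_arctan.continuousOn continuousOn_id
    intro x hx; exact ne_of_gt hx
  · intro x hx
    rw [interior_Ioi] at hx
    have hx0 : (0:ℝ) < x := hx
    have h1 : HasDerivAt (fun t : ℝ => Real.arctan t / t)
        ((1 / (1 + x ^ 2) * x - Real.arctan x * 1) / x ^ 2) x :=
      (Real.hasDerivAt_arctan x).div (hasDerivAt_id x) (ne_of_gt hx0)
    rw [h1.deriv]
    apply div_neg_of_neg_of_pos
    · have h2 : 1 / (1 + x ^ 2) * x = x / (1 + x ^ 2) := by ring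
      rw [h2]
      have := aux_arctan_gt hx0
      linarith
    · positivity

/-- For the consensus protocol with self-delay, the critical delay
`τ(λ) = (1/ω(λ))·arctan(k₂·ω(λ)/k₁)`, where
`ω(λ) = sqrt((k₂²λ² + sqrt(k₂⁴λ⁴ + 4k₁²λ²))/2)`, is strictly decreasing in the
Laplacian eigenvalue `λ` on `(0,∞)`; in particular the largest eigenvalue yields
the smallest crossing delay. -/
theorem tau_strictAnti_of_selfDelay (k₁ k₂ : ℝ) (hk₁ : 0 < k₁) (hk₂ : 0 < k₂)
    (ω τ : ℝ → ℝ)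
    (hω : ∀ l : ℝ, ω l =
      Real.sqrt ((k₂ ^ 2 * l ^ 2 + Real.sqrt (k₂ ^ 4 * l ^ 4 + 4 * k₁ ^ 2 * l ^ 2)) / 2))
    (hτ : ∀ l : ℝ, τ l = (1 / ω l) * Real.arctan (k₂ * ω l / k₁)) :
    StrictAntiOn τ (Set.Ioi 0) ∧
      ∀ l₁ l₂ : ℝ, 0 < l₁ → l₁ < l₂ → τ l₂ < τ l₁ := by
  -- positivity of ω
  have hωpos : ∀ l : ℝ, 0 < l → 0 < ω l := by
    intro l hl
    rw [hω l]
    apply Real.sqrt_pos.mpr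
    have : (0:ℝ) < k₂ ^ 2 * l ^ 2 := by positivity
    have hs : (0:ℝ) ≤ Real.sqrt (k₂ ^ 4 * l ^ 4 + 4 * k₁ ^ 2 * l ^ 2) := Real.sqrt_nonneg _
    linarith
  -- strict monotonicity of ω
  have hωmono : ∀ a b : ℝ, 0 < a → a < b → ω a < ω b := by
    intro a b ha hab
    have hb : 0 < b := lt_trans ha hab
    rw [hω a, hω b]
    apply Real.sqrt_lt_sqrt
    · positivity
    have h2 : a ^ 2 < b ^ 2 := by nlinarith
    have h4 : a ^ 4 < b ^ 4 := by nlinarith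
    have hs : Real.sqrt (k₂ ^ 4 * a ^ 4 + 4 * k₁ ^ 2 * a ^ 2) <
        Real.sqrt (k₂ ^ 4 * b ^ 4 + 4 * k₁ ^ 2 * b ^ 2) := by
      apply Real.sqrt_lt_sqrt (by positivity)
      have h4' := mul_lt_mul_of_pos_left h4 (by positivity : (0:ℝ) < k₂ ^ 4)
      have h2' := mul_lt_mul_of_pos_left h2 (by positivity : (0:ℝ) < 4 * k₁ ^ 2)
      nlinarith
    have hq : k₂ ^ 2 * a ^ 2 < k₂ ^ 2 * b ^ 2 :=
      mul_lt_mul_of_pos_left h2 (by positivity)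
    linarith
  -- rewrite τ
  have hc : (0:ℝ) < k₂ / k₁ := div_pos hk₂ hk₁
  have hτ' : ∀ l : ℝ, 0 < l →
      τ l = (k₂ / k₁) * (Real.arctan ((k₂ / k₁) * ω l) / ((k₂ / k₁) * ω l)) := by
    intro l hl
    have hω0 : ω l ≠ 0 := ne_of_gt (hωpos l hl)
    rw [hτ l]
    have harg : k₂ * ω l / k₁ = (k₂ / k₁) * ω l := by ring
    rw [harg]
    field_simp
  have key : ∀ a b : ℝ, 0 < a → a < b → τ b < τ a := by
    intro a b ha hab
    have hb : 0 < b := lt_trans ha hab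
    rw [hτ' a ha, hτ' b hb]
    apply mul_lt_mul_of_pos_left _ hc
    apply aux_arctan_div_strictAnti
    · exact mul_pos hc (hωpos a ha)
    · exact mul_pos hc (hωpos b hb)
    · exact mul_lt_mul_of_pos_left (hωmono a b ha hab) hc
  exact ⟨fun a ha b hb hab => key a b ha hab, fun a b ha hab => key a b ha hab⟩
end

section
/- Let k₁ > 0, k₂ > 0, λ > 0, let ω = sqrt((k₂²λ² + sqrt(k₂⁴λ⁴ + 4k₁²λ²))/2) and τ = (1/ω)·arctan(k₂ω/k₁). Then the complex number s = iω is a root of the quasi-polynomial s² + λ(k₂ s + k₁)e^{−τ s} = 0. -/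
set_option maxHeartbeats 1000000


/-- For the consensus protocol with self-delay: with
`ω = sqrt((k₂²λ² + sqrt(k₂⁴λ⁴ + 4k₁²λ²))/2)` and `τ = (1/ω)·arctan(k₂ω/k₁)`,
the complex number `s = iω` is a root of the quasi-polynomial
`s² + λ(k₂ s + k₁)e^{−τ s}`. -/
theorem iomega_is_root_selfDelay (k₁ k₂ l : ℝ) (hk₁ : 0 < k₁) (hk₂ : 0 < k₂)
    (hl : 0 < l) (ω τ : ℝ)
    (hω : ω = Real.sqrt ((k₂ ^ 2 * l ^ 2 + Real.sqrt (k₂ ^ 4 * l ^ 4 + 4 * k₁ ^ 2 * l ^ 2)) / 2))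
    (hτ : τ = (1 / ω) * Real.arctan (k₂ * ω / k₁)) :
    (Complex.I * ω) ^ 2
      + (l : ℂ) * ((k₂ : ℂ) * (Complex.I * ω) + (k₁ : ℂ))
        * Complex.exp (-(τ : ℂ) * (Complex.I * ω)) = 0 := by
  set S := Real.sqrt (k₂ ^ 4 * l ^ 4 + 4 * k₁ ^ 2 * l ^ 2) with hS
  have hSnn : 0 ≤ S := Real.sqrt_nonneg _
  have hS2 : S ^ 2 = k₂ ^ 4 * l ^ 4 + 4 * k₁ ^ 2 * l ^ 2 := Real.sq_sqrt (by positivity)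
  have hargnn : (0:ℝ) < (k₂ ^ 2 * l ^ 2 + S) / 2 := by positivity
  have hωpos : 0 < ω := by rw [hω]; exact Real.sqrt_pos.mpr hargnn
  have hω2 : ω ^ 2 = (k₂ ^ 2 * l ^ 2 + S) / 2 := by
    rw [hω]; exact Real.sq_sqrt hargnn.le
  have hω4 : ω ^ 4 = k₂ ^ 2 * l ^ 2 * ω ^ 2 + k₁ ^ 2 * l ^ 2 := by
    have h : ω ^ 4 = (ω ^ 2) ^ 2 := by ring
    rw [h, hω2]; nlinarith [hS2]
  set r := Real.sqrt (k₁ ^ 2 + k₂ ^ 2 * ω ^ 2) with hr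
  have hrpos : 0 < r := Real.sqrt_pos.mpr (by positivity)
  have hr2 : r ^ 2 = k₁ ^ 2 + k₂ ^ 2 * ω ^ 2 := Real.sq_sqrt (by positivity)
  have key : ω ^ 2 = l * r := by
    have h1 : (ω ^ 2) ^ 2 = (l * r) ^ 2 := by
      rw [mul_pow, hr2]; nlinarith [hω4]
    nlinarith [h1, sq_nonneg ω, mul_pos hl hrpos, sq_nonneg (ω ^ 2 - l * r),
      sq_nonneg (ω ^ 2 + l * r)]
  set θ := Real.arctan (k₂ * ω / k₁) with hθ
  have hτω : τ * ω = θ := by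
    rw [hτ]; field_simp
  have hsq : Real.sqrt (1 + (k₂ * ω / k₁) ^ 2) = r / k₁ := by
    have h : 1 + (k₂ * ω / k₁) ^ 2 = (r / k₁) ^ 2 := by
      field_simp
      linear_combination -hr2
    rw [h, Real.sqrt_sq (by positivity)]
  have hcos : Real.cos θ = k₁ / r := by
    rw [hθ, Real.cos_arctan, hsq, one_div_div]
  have hsin : Real.sin θ = k₂ * ω / r := by
    rw [hθ, Real.sin_arctan, hsq]
    field_simp
  -- rewrite the exponential
  have hexp : Complex.exp (-(τ : ℂ) * (Complex.I * ω))
      = (Real.cos θ : ℂ) - (Real.sin θ : ℂ) * Complex.I := by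
    have h1 : -(τ : ℂ) * (Complex.I * ω) = (-(θ:ℝ) : ℂ) * Complex.I := by
      rw [← hτω]
      push_cast
      ring
    rw [h1, Complex.exp_mul_I, Complex.cos_neg, Complex.sin_neg,
      ← Complex.ofReal_cos, ← Complex.ofReal_sin]
    ring
  rw [hexp, hcos, hsin]
  have hrC : (r : ℂ) ≠ 0 := by exact_mod_cast hrpos.ne'
  have keyC : (ω : ℂ) ^ 2 = (l : ℂ) * r := by exact_mod_cast key
  have hr2C : (r : ℂ) ^ 2 = (k₁ : ℂ) ^ 2 + (k₂ : ℂ) ^ 2 * (ω : ℂ) ^ 2 := by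
    exact_mod_cast hr2
  push_cast
  field_simp
  ring_nf
  linear_combination ((ω:ℂ)^2*(r:ℂ) - (ω:ℂ)^2*(l:ℂ)*(k₂:ℂ)^2) * Complex.I_sq - (l:ℂ)*hr2C - (r:ℂ)*keyC
end

section
/- Let k₁ > 0, k₂ > 0, λ > 0, let ω* = sqrt((k₂²λ² + sqrt(k₂⁴λ⁴ + 4k₁²λ²))/2) and τ* = (1/ω*)·arctan(k₂ω*/k₁). Then for every delay τ' with 0 ≤ τ' < τ* and every real ω > 0, the complex number iω is NOT a root of s² + λ(k₂ s + k₁)e^{−τ' s} = 0. Hence τ* is the smallest nonnegative delay at which the disagreement factor has a root on the positive imaginary axis. -/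
set_option maxHeartbeats 1000000 in
/-- For the consensus protocol with self-delay: with
`ω* = sqrt((k₂²λ² + sqrt(k₂⁴λ⁴ + 4k₁²λ²))/2)` and `τ* = (1/ω*)·arctan(k₂ω*/k₁)`,
no delay `0 ≤ τ' < τ*` produces a root of `s² + λ(k₂ s + k₁)e^{−τ' s}` on the
positive imaginary axis. -/
theorem no_imaginary_root_before_tau_star (k₁ k₂ l : ℝ) (hk₁ : 0 < k₁) (hk₂ : 0 < k₂)
    (hl : 0 < l) (ωs τs : ℝ)
    (hωs : ωs = Real.sqrt ((k₂ ^ 2 * l ^ 2 + Real.sqrt (k₂ ^ 4 * l ^ 4 + 4 * k₁ ^ 2 * l ^ 2)) / 2))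
    (hτs : τs = (1 / ωs) * Real.arctan (k₂ * ωs / k₁)) :
    ∀ τ' : ℝ, 0 ≤ τ' → τ' < τs → ∀ ω : ℝ, 0 < ω →
      (Complex.I * ω) ^ 2
        + (l : ℂ) * ((k₂ : ℂ) * (Complex.I * ω) + (k₁ : ℂ))
          * Complex.exp (-(τ' : ℂ) * (Complex.I * ω)) ≠ 0 := by
  intro τ' hτ0 hττ ω hω h
  set s : ℝ := Real.sqrt (k₂ ^ 4 * l ^ 4 + 4 * k₁ ^ 2 * l ^ 2) with hs
  have hs0 : 0 ≤ s := Real.sqrt_nonneg _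
  have hssq : s ^ 2 = k₂ ^ 4 * l ^ 4 + 4 * k₁ ^ 2 * l ^ 2 := by
    rw [hs, Real.sq_sqrt]; positivity
  have hb0 : (0:ℝ) ≤ k₂ ^ 2 * l ^ 2 := by positivity
  have hc : (0:ℝ) < k₁ ^ 2 * l ^ 2 := by positivity
  have hsbig : k₂ ^ 2 * l ^ 2 < s := by
    by_contra hcon
    push_neg at hcon
    have h1 : s * s ≤ (k₂ ^ 2 * l ^ 2) * (k₂ ^ 2 * l ^ 2) := mul_le_mul hcon hcon hs0 hb0
    nlinarith
  have hωs2 : ωs ^ 2 = (k₂ ^ 2 * l ^ 2 + s) / 2 := by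
    rw [hωs, Real.sq_sqrt]; positivity
  have hωspos : 0 < ωs := by
    rw [hωs]; apply Real.sqrt_pos.mpr; positivity
  set θ : ℝ := τ' * ω with hθ
  have hexp : Complex.exp (-(τ' : ℂ) * (Complex.I * ω))
      = (Real.cos θ : ℂ) - (Real.sin θ : ℂ) * Complex.I := by
    have h1 : -(τ' : ℂ) * (Complex.I * ω) = ((-θ : ℝ) : ℂ) * Complex.I := by
      push_cast [hθ]; ring
    rw [h1, Complex.exp_mul_I, ← Complex.ofReal_cos, ← Complex.ofReal_sin,
      Real.cos_neg, Real.sin_neg]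
    push_cast; ring
  have key : ((l * (k₁ * Real.cos θ + k₂ * ω * Real.sin θ) - ω ^ 2 : ℝ) : ℂ)
      + ((l * (k₂ * ω * Real.cos θ - k₁ * Real.sin θ) : ℝ) : ℂ) * Complex.I = 0 := by
    rw [← h, hexp]; push_cast
    linear_combination ((l:ℂ) * k₂ * ω * Complex.sin (θ:ℝ) - (ω:ℂ) ^ 2) * Complex.I_sq
  have hre : l * (k₁ * Real.cos θ + k₂ * ω * Real.sin θ) - ω ^ 2 = 0 := by
    simpa only [Complex.add_re, Complex.ofReal_re, Complex.mul_I_re, Complex.ofReal_im,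
      Complex.zero_re, neg_zero, add_zero] using congrArg Complex.re key
  have him : l * (k₂ * ω * Real.cos θ - k₁ * Real.sin θ) = 0 := by
    simpa only [Complex.add_im, Complex.ofReal_im, Complex.mul_I_im, Complex.ofReal_re,
      Complex.zero_im, zero_add] using congrArg Complex.im key
  have hpy := Real.sin_sq_add_cos_sq θ
  have hmod : ω ^ 4 = l ^ 2 * (k₁ ^ 2 + k₂ ^ 2 * ω ^ 2) := by
    linear_combination (-(l * (k₁ * Real.cos θ + k₂ * ω * Real.sin θ) + ω ^ 2)) * hre
      + (-(l * (k₂ * ω * Real.cos θ - k₁ * Real.sin θ))) * him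
      + (l ^ 2 * (k₁ ^ 2 + k₂ ^ 2 * ω ^ 2)) * hpy
  have hωsq : ω ^ 2 = ωs ^ 2 := by nlinarith
  have hωeq : ω = ωs := by
    have h1 := Real.sqrt_sq hω.le
    have h2 := Real.sqrt_sq hωspos.le
    rw [← h1, ← h2, hωsq]
  -- angle part
  set α : ℝ := Real.arctan (k₂ * ωs / k₁) with hα
  have hαlt : α < Real.pi / 2 := Real.arctan_lt_pi_div_two _
  have hθ0 : 0 ≤ θ := by positivity
  have hθα : θ < α := by
    have : τ' * ωs < (1 / ωs * α) * ωs := by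
      apply mul_lt_mul_of_pos_right _ hωspos
      rw [← hτs]; exact hττ
    rw [hθ, hωeq]
    calc τ' * ωs < (1 / ωs * α) * ωs := this
      _ = α := by field_simp
  have hcos : 0 < Real.cos θ := Real.cos_pos_of_mem_Ioo
    ⟨by nlinarith [Real.pi_pos], lt_trans hθα hαlt⟩
  have htan : Real.tan θ = k₂ * ωs / k₁ := by
    rw [Real.tan_eq_sin_div_cos]
    rw [hωeq] at him
    field_simp
    nlinarith [him]
  have hlt : Real.tan θ < Real.tan α :=
    Real.tan_lt_tan_of_nonneg_of_lt_pi_div_two hθ0 hαlt hθα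
  rw [htan, hα, Real.tan_arctan] at hlt
  exact lt_irrefl _ hlt
end

section
/- Let k₁ > 0, k₂ > 0, λ > 0, τ ≥ 0, and suppose ω > 0 is a real number such that s = iω is a root of s² + λ(k₂ s + k₁)e^{−τ s} = 0. Then ω satisfies ω⁴ = λ²(k₂²ω² + k₁²), and therefore ω = sqrt((k₂²λ² + sqrt(k₂⁴λ⁴ + 4k₁²λ²))/2). -/
/-!
On the imaginary axis the delay factor `e^{-iτω}` has modulus one, so `s = iω` is a root of
`s² + P(s) e^{-τ s}` only if `ω² = |P(iω)|`. For `P(s) = λ(k₂ s + k₁)` this reads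
`ω⁴ = λ²(k₂²ω² + k₁²)`, a quadratic equation in `ω²` with non-positive constant term, whose
only positive root is `(k₂²λ² + √(k₂⁴λ⁴ + 4k₁²λ²))/2`.
-/

open Complex

theorem sq_eq_norm_of_root_on_imaginary_axis {a : ℂ} {τ ω : ℝ}
    (h : (I * ω) ^ 2 + a * exp (-(τ : ℂ) * (I * ω)) = 0) : ω ^ 2 = ‖a‖ := by
  have hdelay : ‖exp (-(τ : ℂ) * (I * ω))‖ = 1 := by
    simpa [mul_comm, mul_left_comm] using norm_exp_ofReal_mul_I (-(τ * ω))
  have heq : a * exp (-(τ : ℂ) * (I * ω)) = ((ω ^ 2 : ℝ) : ℂ) := by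
    push_cast
    linear_combination (exp := 1) h - ω ^ 2 * I_sq
  have := congrArg (‖·‖) heq
  simp only [norm_mul, hdelay, mul_one, norm_real, Real.norm_eq_abs, abs_sq] at this
  exact this.symm

theorem normSq_ofReal_mul_mul_I_add (l k₁ k₂ ω : ℝ) :
    normSq ((l : ℂ) * ((k₂ : ℂ) * (I * ω) + (k₁ : ℂ))) = l ^ 2 * (k₂ ^ 2 * ω ^ 2 + k₁ ^ 2) := by
  have hlin : (k₂ : ℂ) * (I * ω) + (k₁ : ℂ) = (k₁ : ℂ) + ((k₂ * ω : ℝ) : ℂ) * I := by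
    push_cast
    ring
  rw [normSq_mul, hlin, normSq_add_mul_I, normSq_ofReal]
  ring

theorem eq_half_add_sqrt_of_sq_eq {a c x : ℝ} (hc : 0 ≤ c) (hx : 0 < x)
    (h : x ^ 2 = a * x + c) : x = (a + √(a ^ 2 + 4 * c)) / 2 := by
  have hdiscrim : discrim 1 (-a) (-c) = √(a ^ 2 + 4 * c) * √(a ^ 2 + 4 * c) := by
    rw [Real.mul_self_sqrt (by positivity), discrim]
    ring
  have hquad : 1 * (x * x) + -a * x + -c = 0 := by linear_combination h
  rcases (quadratic_eq_zero_iff one_ne_zero hdiscrim x).mp hquad with hplus | hminus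
  · simpa using hplus
  · -- the other root is non-positive because `√(a² + 4c) ≥ |a| ≥ a`
    have : a ≤ √(a ^ 2 + 4 * c) :=
      Real.le_sqrt_of_sq_le (by linarith)
    rw [hminus] at hx
    linarith

theorem crossing_frequency_selfDelay_general (k₁ k₂ l τ ω : ℝ) (hω : 0 < ω)
    (hroot : (Complex.I * ω) ^ 2
      + (l : ℂ) * ((k₂ : ℂ) * (Complex.I * ω) + (k₁ : ℂ))
        * Complex.exp (-(τ : ℂ) * (Complex.I * ω)) = 0) :
    ω ^ 4 = l ^ 2 * (k₂ ^ 2 * ω ^ 2 + k₁ ^ 2) ∧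
      ω = Real.sqrt ((k₂ ^ 2 * l ^ 2 + Real.sqrt (k₂ ^ 4 * l ^ 4 + 4 * k₁ ^ 2 * l ^ 2)) / 2) := by
  have hmagnitude : ω ^ 4 = l ^ 2 * (k₂ ^ 2 * ω ^ 2 + k₁ ^ 2) := by
    rw [← normSq_ofReal_mul_mul_I_add, ← Complex.sq_norm, ← sq_eq_norm_of_root_on_imaginary_axis hroot]
    ring
  have hω_sq : ω ^ 2 = (k₂ ^ 2 * l ^ 2 + √((k₂ ^ 2 * l ^ 2) ^ 2 + 4 * (k₁ ^ 2 * l ^ 2))) / 2 :=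
    eq_half_add_sqrt_of_sq_eq (by positivity) (by positivity) (by linear_combination hmagnitude)
  refine ⟨hmagnitude, ?_⟩
  rw [← Real.sqrt_sq hω.le, hω_sq]
  ring_nf

/-- For the consensus protocol with self-delay: if `iω` (with `ω > 0`) is a root
of `s² + λ(k₂ s + k₁)e^{−τ s}` for some delay `τ ≥ 0`, then `ω` satisfies the
magnitude condition `ω⁴ = λ²(k₂²ω² + k₁²)`, and hence equals the crossing
frequency formula. -/
theorem crossing_frequency_selfDelay (k₁ k₂ l τ ω : ℝ) (hk₁ : 0 < k₁) (hk₂ : 0 < k₂)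
    (hl : 0 < l) (hτ : 0 ≤ τ) (hω : 0 < ω)
    (hroot : (Complex.I * ω) ^ 2
      + (l : ℂ) * ((k₂ : ℂ) * (Complex.I * ω) + (k₁ : ℂ))
        * Complex.exp (-(τ : ℂ) * (Complex.I * ω)) = 0) :
    ω ^ 4 = l ^ 2 * (k₂ ^ 2 * ω ^ 2 + k₁ ^ 2) ∧
      ω = Real.sqrt ((k₂ ^ 2 * l ^ 2 + Real.sqrt (k₂ ^ 4 * l ^ 4 + 4 * k₁ ^ 2 * l ^ 2)) / 2) :=
  crossing_frequency_selfDelay_general k₁ k₂ l τ ω hω hroot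
end
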